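/- Let A be a bimonoid and B a cocommutative Hopf monoid with antipode z in M, let s : A → B be a bimonoid morphism and i : B → A a monoid morphism, and set ⃗s := m_A∘(1_A⊗(i∘z∘s))∘δ_A : A → A. Then ⃗s∘m_A = m_A∘(m_A⊗(i∘z∘s))∘(1_A⊗c_{A,A})∘(δ_A⊗1_A)∘(1_A⊗⃗s) as morphisms A⊗A → A. -/

import Mathlib

open CategoryTheory Category MonoidalCategory Limits

universe v u

variable {C : Type u} [Category.{v} C] [MonoidalCategory C]

/-- The middle-four interchange `(W ⊗ X) ⊗ (Y ⊗ Z) ⟶ (W ⊗ Y) ⊗ (X ⊗ Z)`,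
i.e. `1 ⊗ c ⊗ 1` with the (suppressed) coherence isomorphisms inserted. -/
def mid4 [BraidedCategory C] (W X Y Z : C) :
    (W ⊗ X) ⊗ (Y ⊗ Z) ⟶ (W ⊗ Y) ⊗ (X ⊗ Z) :=
  (α_ W X (Y ⊗ Z)).hom ≫ (W ◁ (α_ X Y Z).inv) ≫
    (W ◁ ((β_ X Y).hom ▷ Z)) ≫ (W ◁ (α_ Y X Z).hom) ≫ (α_ W Y (X ⊗ Z)).inv

/-- A monoid structure `(A, m, u)` on the object `A`. -/
structure MonObjStr (A : C) where
  mul : A ⊗ A ⟶ A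
  one : 𝟙_ C ⟶ A
  one_mul : (one ▷ A) ≫ mul = (λ_ A).hom
  mul_one : (A ◁ one) ≫ mul = (ρ_ A).hom
  mul_assoc : (mul ▷ A) ≫ mul = (α_ A A A).hom ≫ (A ◁ mul) ≫ mul

/-- A comonoid structure `(A, δ, ε)` on the object `A`. -/
structure ComonObjStr (A : C) where
  comul : A ⟶ A ⊗ A
  counit : A ⟶ 𝟙_ C
  counit_comul : comul ≫ (counit ▷ A) = (λ_ A).inv
  comul_counit : comul ≫ (A ◁ counit) = (ρ_ A).inv
  comul_assoc : comul ≫ (comul ▷ A) ≫ (α_ A A A).hom = comul ≫ (A ◁ comul)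

/-- A bimonoid structure on the object `A`: a monoid and comonoid structure such that
the comultiplication and counit are monoid morphisms (`A ⊗ A` carrying the multiplication
`(m ⊗ m) ∘ (1 ⊗ c ⊗ 1)` and unit `u ⊗ u`). -/
structure BimonObjStr [BraidedCategory C] (A : C) extends toMonObj : MonObjStr A, toComonObj : ComonObjStr A where
  mul_comul : mul ≫ comul = (comul ⊗ₘ comul) ≫ mid4 A A A A ≫ (mul ⊗ₘ mul)
  one_comul : one ≫ comul = (λ_ (𝟙_ C)).inv ≫ (one ⊗ₘ one)
  mul_counit : mul ≫ counit = (counit ⊗ₘ counit) ≫ (λ_ (𝟙_ C)).hom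
  one_counit : one ≫ counit = 𝟙 (𝟙_ C)

/-- `f` is a morphism of monoids. -/
def IsMonHomStr {A B : C} (MA : MonObjStr A) (MB : MonObjStr B) (f : A ⟶ B) : Prop :=
  MA.mul ≫ f = (f ⊗ₘ f) ≫ MB.mul ∧ MA.one ≫ f = MB.one

/-- `f` is a morphism of comonoids. -/
def IsComonHomStr {A B : C} (MA : ComonObjStr A) (MB : ComonObjStr B) (f : A ⟶ B) : Prop :=
  f ≫ MB.comul = MA.comul ≫ (f ⊗ₘ f) ∧ f ≫ MB.counit = MA.counit

/-- `f` is a morphism of bimonoids (preserves all four structure maps). -/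
def IsBimonHomStr [BraidedCategory C] {A B : C} (MA : BimonObjStr A) (MB : BimonObjStr B)
    (f : A ⟶ B) : Prop :=
  IsMonHomStr MA.toMonObj MB.toMonObj f ∧ IsComonHomStr MA.toComonObj MB.toComonObj f

/-- `z` is an antipode for the bimonoid `M`, i.e. `M` is a Hopf monoid. -/
def IsAntipode [BraidedCategory C] {B : C} (M : BimonObjStr B) (z : B ⟶ B) : Prop :=
  M.comul ≫ (z ▷ B) ≫ M.mul = M.counit ≫ M.one ∧
    M.comul ≫ (B ◁ z) ≫ M.mul = M.counit ≫ M.one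

/-- A comonoid is cocommutative when `c ∘ δ = δ`. -/
def IsCocomm [BraidedCategory C] {A : C} (M : ComonObjStr A) : Prop :=
  M.comul ≫ (β_ A A).hom = M.comul

/-!
Put `f = i ∘ z ∘ s`. The antipode of a Hopf monoid reverses products and `s`, `i` preserve
them, so `f (a b) = f b · f a`. In Sweedler notation
`⃗s (a b) = (a₁ b₁) (f b₂ · f a₂) = (a₁ (b₁ · f b₂)) · f a₂ = a₁ · ⃗s b · f a₂`,
which is the right-hand side.
-/

section

open MonObj ComonObj HopfObj

theorem MonObj.mul_tensorHom_mul_comp_mul {M : C} [MonObj M] :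
    (μ ⊗ₘ μ) ≫ μ[M] =
      (α_ (M ⊗ M) M M).inv ≫ ((α_ M M M).hom ▷ M) ≫ ((M ◁ μ) ▷ M) ≫ (μ ▷ M) ≫ μ := by
  rw [MonoidalCategory.tensorHom_def_assoc, ← whisker_exchange_assoc, MonObj.mul_assoc,
    associator_naturality_middle_assoc, ← MonoidalCategory.whiskerLeft_comp_assoc,
    MonObj.mul_assoc]
  simp

section Braided

variable [BraidedCategory C]

abbrev BimonObjStr.toBimonObj {A : C} (M : BimonObjStr A) : BimonObj A where
  one := M.one
  mul := M.mul
  one_mul := M.one_mul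
  mul_one := M.mul_one
  mul_assoc := M.mul_assoc
  comul := M.comul
  counit := M.counit
  counit_comul := M.counit_comul
  comul_counit := M.comul_counit
  comul_assoc := M.comul_assoc.symm
  mul_comul := M.mul_comul
  one_comul := M.one_comul
  mul_counit := M.mul_counit
  one_counit := M.one_counit

abbrev BimonObjStr.toHopfObj {A : C} (M : BimonObjStr A) (z : A ⟶ A) (hz : IsAntipode M z) :
    HopfObj A where
  toBimonObj := M.toBimonObj
  antipode := z
  antipode_left := hz.1
  antipode_right := hz.2

theorem tensorμ_whiskerLeft_braiding (W X Y Z : C) :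
    tensorμ W X Y Z ≫ ((W ⊗ Y) ◁ (β_ X Z).hom) =
      (α_ W X (Y ⊗ Z)).hom ≫ (W ◁ (β_ X (Y ⊗ Z)).hom) ≫ (α_ W (Y ⊗ Z) X).inv ≫
        ((α_ W Y Z).inv ▷ X) ≫ (α_ (W ⊗ Y) Z X).hom := by
  simp [tensorμ, BraidedCategory.braiding_tensor_right_hom]

def IsAntiMulHom {M N : C} [MonObj M] [MonObj N] (f : M ⟶ N) : Prop :=
  μ ≫ f = (f ⊗ₘ f) ≫ (β_ N N).hom ≫ μ

theorem isAntiMulHom_antipode (M : C) [HopfObj M] : IsAntiMulHom 𝒮[M] :=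
  HopfObj.mul_antipode M

theorem IsAntiMulHom.comp_of_mul_hom {M N P : C} [MonObj M] [MonObj N] [MonObj P]
    {f : M ⟶ N} {g : N ⟶ P} (hf : IsAntiMulHom f) (hg : μ ≫ g = (g ⊗ₘ g) ≫ μ) :
    IsAntiMulHom (f ≫ g) := by
  rw [IsAntiMulHom, ← Category.assoc, hf]
  simp [hg]

theorem IsAntiMulHom.of_mul_hom_comp {M N P : C} [MonObj M] [MonObj N] [MonObj P]
    {f : M ⟶ N} {g : N ⟶ P} (hf : μ ≫ f = (f ⊗ₘ f) ≫ μ) (hg : IsAntiMulHom g) :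
    IsAntiMulHom (f ≫ g) := by
  rw [IsAntiMulHom, ← Category.assoc, hf, Category.assoc, hg,
    BraidedCategory.braiding_naturality_assoc]
  simp

theorem IsAntiMulHom.mul_comp_comul_whiskerLeft_mul {A : C} [BimonObj A] {f : A ⟶ A}
    (hf : IsAntiMulHom f) :
    μ ≫ Δ ≫ (A ◁ f) ≫ μ =
      (A ◁ (Δ ≫ (A ◁ f) ≫ μ)) ≫ (Δ ▷ A) ≫ (α_ A A A).hom ≫ (A ◁ (β_ A A).hom) ≫
        (α_ A A A).inv ≫ (μ ⊗ₘ f) ≫ μ := by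
  have braid_naturality {X Y : C} (k : X ⟶ Y) :
      (A ◁ k) ≫ (Δ ▷ Y) ≫ (α_ A A Y).hom ≫ (A ◁ (β_ A Y).hom) ≫ (α_ A Y A).inv =
        (Δ ▷ X) ≫ (α_ A A X).hom ≫ (A ◁ (β_ A X).hom) ≫ (α_ A X A).inv ≫ ((A ◁ k) ▷ A) := by
    rw [whisker_exchange_assoc, associator_naturality_right_assoc,
      ← MonoidalCategory.whiskerLeft_comp_assoc, BraidedCategory.braiding_naturality_right,
      MonoidalCategory.whiskerLeft_comp_assoc, associator_inv_naturality_middle]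
  calc μ ≫ Δ ≫ (A ◁ f) ≫ μ = (Δ ⊗ₘ Δ) ≫ tensorμ A A A A ≫ (μ ⊗ₘ (μ ≫ f)) ≫ μ := by
        rw [BimonObj.mul_comul_assoc]
        simp [MonoidalCategory.tensorHom_def]
    -- `a₁ (b₁ · f b₂) · f a₂`
    _ = (Δ ⊗ₘ Δ) ≫ (α_ A A (A ⊗ A)).hom ≫ (A ◁ (β_ A (A ⊗ A)).hom) ≫ (α_ A (A ⊗ A) A).inv ≫
          ((A ◁ ((A ◁ f) ≫ μ)) ▷ A) ≫ (μ ⊗ₘ f) ≫ μ := by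
        rw [hf, BraidedCategory.braiding_naturality_assoc, ← whiskerLeft_comp_tensorHom_assoc,
          reassoc_of% tensorμ_whiskerLeft_braiding]
        congr 4
        rw [MonoidalCategory.tensorHom_def' f f, ← whiskerLeft_comp_tensorHom, Category.assoc,
          MonObj.mul_tensorHom_mul_comp_mul, MonoidalCategory.tensorHom_def' μ f,
          Category.assoc, ← whisker_exchange_assoc]
        monoidal
    _ = _ := by
        rw [MonoidalCategory.tensorHom_def', Category.assoc, reassoc_of% braid_naturality Δ,
          reassoc_of% braid_naturality]
        simp only [MonoidalCategory.whiskerLeft_comp, comp_whiskerRight, Category.assoc]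

end Braided

end

theorem statement6_general [SymmetricCategory C] {A B : C}
    (MA : BimonObjStr A) (MB : BimonObjStr B) (z : B ⟶ B) (hz : IsAntipode MB z)
    (s : A ⟶ B) (hs : IsBimonHomStr MA MB s)
    (i : B ⟶ A) (hi : IsMonHomStr MB.toMonObj MA.toMonObj i) :
    MA.mul ≫ (MA.comul ≫ (A ◁ (s ≫ z ≫ i)) ≫ MA.mul) =
      (A ◁ (MA.comul ≫ (A ◁ (s ≫ z ≫ i)) ≫ MA.mul)) ≫ (MA.comul ▷ A) ≫
        (α_ A A A).hom ≫ (A ◁ (β_ A A).hom) ≫ (α_ A A A).inv ≫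
        (MA.mul ⊗ₘ (s ≫ z ≫ i)) ≫ MA.mul := by
  let _ := MA.toBimonObj
  let _ := MB.toHopfObj z hz
  have hf : IsAntiMulHom (s ≫ z ≫ i) :=
    .of_mul_hom_comp hs.1.1 ((isAntiMulHom_antipode B).comp_of_mul_hom hi.1)
  exact hf.mul_comp_comul_whiskerLeft_mul

theorem statement6 [SymmetricCategory C] {A B : C}
    (MA : BimonObjStr A) (MB : BimonObjStr B) (z : B ⟶ B) (hz : IsAntipode MB z)
    (hcoc : IsCocomm MB.toComonObj)
    (s : A ⟶ B) (hs : IsBimonHomStr MA MB s)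
    (i : B ⟶ A) (hi : IsMonHomStr MB.toMonObj MA.toMonObj i) :
    MA.mul ≫ (MA.comul ≫ (A ◁ (s ≫ z ≫ i)) ≫ MA.mul) =
      (A ◁ (MA.comul ≫ (A ◁ (s ≫ z ≫ i)) ≫ MA.mul)) ≫ (MA.comul ▷ A) ≫
        (α_ A A A).hom ≫ (A ◁ (β_ A A).hom) ≫ (α_ A A A).inv ≫
        (MA.mul ⊗ₘ (s ≫ z ≫ i)) ≫ MA.mul :=
  statement6_general MA MB z hz s hs i hi
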